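/- arXiv:2311.08609 — 3 statements merged into one kernel-verified Lean document; each statement's English description precedes it below -/
import Mathlib

section
/- Let X be a topological space equipped with a CW-complex structure. Then every compact subset of X intersects only finitely many of the (open) cells of X. -/
/-!
Choose a point of `K` in each open cell that `K` meets. These points lie in distinct open cells,
so every set `S` of them meets each open cell in at most one point, and such an `S` is closed: by
induction on the dimension, the trace of `S` on a closed cell is at most one point of the open cell
together with the traces of `S` on the finitely many lower-dimensional closed cells covering the
boundary, cut down to the (compact) closed cell. So the chosen points form a compact discrete
subset of `K`, which is finite.
-/

open Metric

/-- A CW-complex structure on a topological space `X` (the classical definition): a family of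
cells in each dimension `n`, each given by a characteristic map from the closed unit ball of
`ℝⁿ` which is continuous with continuous inverse (a homeomorphism onto its image on the open
ball), such that the open cells are pairwise disjoint and partition `X`, the boundary sphere of
each cell is mapped into finitely many cells of lower dimension, and `X` carries the weak
topology with respect to the closed cells. -/
structure CWStructure (X : Type) [TopologicalSpace X] where
  /-- The indexing type of the `n`-cells. -/
  cell (n : ℕ) : Type
  /-- The characteristic map of each `n`-cell, defined on the closed unit ball of `ℝⁿ`. -/
  map (n : ℕ) (i : cell n) : PartialEquiv (Fin n → ℝ) X
  source_eq (n : ℕ) (i : cell n) : (map n i).source = closedBall 0 1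
  continuousOn (n : ℕ) (i : cell n) : ContinuousOn (map n i) (closedBall 0 1)
  continuousOn_symm (n : ℕ) (i : cell n) : ContinuousOn (map n i).symm (map n i).target
  pairwiseDisjoint' :
    (Set.univ : Set (Σ n, cell n)).PairwiseDisjoint fun ni => map ni.1 ni.2 '' ball 0 1
  mapsTo (n : ℕ) (i : cell n) : ∃ I : ∀ m, Finset (cell m),
    Set.MapsTo (map n i) (sphere 0 1)
      (⋃ (m : ℕ) (_ : m < n), ⋃ j ∈ I m, map m j '' closedBall 0 1)
  closed' (A : Set X) :
    (∀ (n : ℕ) (j : cell n), IsClosed (A ∩ map n j '' closedBall 0 1)) → IsClosed A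
  union' : ⋃ (n : ℕ), ⋃ (j : cell n), map n j '' closedBall 0 1 = Set.univ

open Function

theorem IsCompact.finite_of_forall_subset_isClosed {X : Type*} [TopologicalSpace X] {S : Set X}
    (hS : IsCompact S) (h : ∀ t ⊆ S, IsClosed t) : S.Finite :=
  hS.finite <| isDiscrete_iff_forall_mem_exists_isClosed.2 fun t ht =>
    ⟨t, h t ht, Set.inter_eq_left.2 ht⟩

theorem finite_setOf_inter_nonempty_of_pairwise_disjoint {ι X : Type*} [TopologicalSpace X]
    {s : ι → Set X} (hs : Pairwise (Disjoint on s))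
    (hclosed : ∀ t : Set X, (∀ i, (t ∩ s i).Subsingleton) → IsClosed t)
    {K : Set X} (hK : IsCompact K) : {i | (K ∩ s i).Nonempty}.Finite := by
  choose f hf using fun i : {i | (K ∩ s i).Nonempty} => i.2
  have index_eq {i : {i | (K ∩ s i).Nonempty}} {j : ι} (h : f i ∈ s j) : i.1 = j :=
    hs.eq (Set.not_disjoint_iff.2 ⟨f i, (hf i).2, h⟩)
  have hf_inj : Injective f := fun i j hij =>
    Subtype.ext (index_eq (hij ▸ (hf j).2))
  have hclosed_range : ∀ t ⊆ Set.range f, IsClosed t := by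
    refine fun t ht => hclosed t fun i x hx y hy => ?_
    obtain ⟨a, rfl⟩ := ht hx.1
    obtain ⟨b, rfl⟩ := ht hy.1
    rw [hf_inj.eq_iff, Subtype.ext_iff, index_eq hx.2, index_eq hy.2]
  have hrange_finite : (Set.range f).Finite :=
    (hK.of_isClosed_subset (hclosed_range _ subset_rfl)
      (Set.range_subset_iff.2 fun i => (hf i).1)).finite_of_forall_subset_isClosed hclosed_range
  exact Set.finite_coe_iff.1 <| (Set.finite_range_iff hf_inj).1 hrange_finite

namespace CWStructure

variable {X : Type} [TopologicalSpace X] (hX : CWStructure X)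

def openCell (n : ℕ) (j : hX.cell n) : Set X := hX.map n j '' ball 0 1

def closedCell (n : ℕ) (j : hX.cell n) : Set X := hX.map n j '' closedBall 0 1

theorem isCompact_closedCell (n : ℕ) (j : hX.cell n) : IsCompact (hX.closedCell n j) :=
  (isCompact_closedBall 0 1).image_of_continuousOn (hX.continuousOn n j)

theorem openCell_subset_closedCell (n : ℕ) (j : hX.cell n) :
    hX.openCell n j ⊆ hX.closedCell n j :=
  Set.image_mono ball_subset_closedBall

theorem closedCell_eq_openCell_union_image_sphere (n : ℕ) (j : hX.cell n) :
    hX.closedCell n j = hX.openCell n j ∪ hX.map n j '' sphere 0 1 := by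
  rw [openCell, closedCell, ← Set.image_union, ball_union_sphere]

theorem pairwise_disjoint_openCell :
    Pairwise (Disjoint on fun p : Σ n, hX.cell n => hX.openCell p.1 p.2) :=
  Set.pairwise_univ.1 hX.pairwiseDisjoint'

theorem isClosed_of_forall_subsingleton_inter_openCell [T2Space X] (S : Set X)
    (hS : ∀ n (j : hX.cell n), (S ∩ hX.openCell n j).Subsingleton) : IsClosed S := by
  refine hX.closed' S fun n => ?_
  induction n using Nat.strong_induction_on with
  | _ n ih =>
    intro j
    change IsClosed (S ∩ hX.closedCell n j)
    obtain ⟨I, hI⟩ := hX.mapsTo n j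
    set L := ⋃ m ∈ Set.Iio n, ⋃ i ∈ I m, S ∩ hX.closedCell m i
    have hL : IsClosed L := (Set.finite_Iio n).isClosed_biUnion fun m hm =>
      (I m).finite_toSet.isClosed_biUnion fun i _ => ih m hm i
    have hdecomp : S ∩ hX.closedCell n j = S ∩ hX.openCell n j ∪ L ∩ hX.closedCell n j := by
      refine subset_antisymm ?_ (Set.union_subset
        (Set.inter_subset_inter_right S (hX.openCell_subset_closedCell n j))
        (Set.inter_subset_inter_left _ <| Set.iUnion₂_subset fun _ _ =>
          Set.iUnion₂_subset fun _ _ => Set.inter_subset_left))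
      rintro x ⟨hxS, hx⟩
      rcases hX.closedCell_eq_openCell_union_image_sphere n j ▸ hx with hx' | ⟨y, hy, rfl⟩
      · exact Or.inl ⟨hxS, hx'⟩
      · refine Or.inr ⟨?_, hx⟩
        have hboundary := hI hy
        simp only [Set.mem_iUnion] at hboundary
        obtain ⟨m, hm, i, hi, hxi⟩ := hboundary
        simp only [L, Set.mem_iUnion, Set.mem_Iio]
        exact ⟨m, hm, i, hi, hxS, hxi⟩
    rw [hdecomp]
    exact (hS n j).finite.isClosed.union (hL.inter (hX.isCompact_closedCell n j).isClosed)

end CWStructure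

/-- In a CW complex, every compact subset intersects only finitely many open cells. -/
theorem CWStructure.compact_inter_finite {X : Type} [TopologicalSpace X] [T2Space X]
    (hX : CWStructure X) (K : Set X) (hK : IsCompact K) :
    {p : Σ n, hX.cell n | (K ∩ hX.map p.1 p.2 '' ball 0 1).Nonempty}.Finite :=
  finite_setOf_inter_nonempty_of_pairwise_disjoint hX.pairwise_disjoint_openCell
    (fun t ht => hX.isClosed_of_forall_subsingleton_inter_openCell t fun n j => ht ⟨n, j⟩) hK
end

section
/- Let m be a natural number and let G = ℂᵐ ⋊ ℂˣ be the semidirect product of the additive group ℂᵐ by the multiplicative group ℂˣ, where t ∈ ℂˣ acts on ℂᵐ by coordinatewise scalar multiplication. Then the projection homomorphism G → ℂˣ induces an isomorphism from the abelianization of G onto ℂˣ. -/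
/-- The homomorphism `G →* MulAut (Multiplicative A)` arising from a distributive action of
`G` on an additive group `A`. -/
def distribToMulAut (G A : Type*) [Group G] [AddGroup A] [DistribMulAction G A] :
    G →* MulAut (Multiplicative A) where
  toFun g := AddEquiv.toMultiplicative (DistribMulAction.toAddAut G A g)
  map_one' := by
    ext x
    show Multiplicative.ofAdd ((1 : G) • x.toAdd) = x
    simp
  map_mul' g h := by
    ext x
    show Multiplicative.ofAdd ((g * h) • x.toAdd) = Multiplicative.ofAdd (g • h • x.toAdd)
    rw [mul_smul]

/-- The group `ℂᵐ ⋊ ℂˣ`, where `ℂˣ` acts by coordinatewise scalar multiplication. -/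
abbrev CmSemidirect (m : ℕ) : Type :=
  Multiplicative (Fin m → ℂ) ⋊[distribToMulAut ℂˣ (Fin m → ℂ)] ℂˣ

/-! The kernel `ℂᵐ` of the projection lies in the commutator subgroup: conjugation by a scalar
`t ≠ 1` multiplies by `t`, so `v = ⁅t, (t - 1)⁻¹ • v⁆`. Hence the projection onto the abelian
group `ℂˣ` factors through the abelianization with trivial kernel. -/

theorem Abelianization.lift_bijective_of_ker_le {G A : Type*} [Group G] [CommGroup A]
    {f : G →* A} (hf : Function.Surjective f) (hker : f.ker ≤ commutator G) :
    Function.Bijective (lift f) := by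
  refine ⟨(injective_iff_map_eq_one _).2 fun x hx => ?_,
    fun a => (hf a).elim fun g hg => ⟨of g, hg⟩⟩
  induction x using QuotientGroup.induction_on with
  | H g => exact (QuotientGroup.eq_one_iff g).2 (hker hx)

theorem SemidirectProduct.ker_rightHom_le_commutator {N G : Type*} [Group N] [Group G]
    {φ : G →* MulAut N} (h : ∀ n : N, ∃ (g : G) (n' : N), n = φ g n' * n'⁻¹) :
    (rightHom : N ⋊[φ] G →* G).ker ≤ commutator (N ⋊[φ] G) := by
  rw [← range_inl_eq_ker_rightHom]
  rintro _ ⟨n, rfl⟩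
  obtain ⟨g, n', rfl⟩ := h n
  rw [map_mul, inl_aut, map_inv inr, map_inv inl, ← commutatorElement_def]
  exact Subgroup.commutator_mem_commutator (Subgroup.mem_top _) (Subgroup.mem_top _)

theorem distribToMulAut_exists_eq_mul_inv {K V : Type*} [DivisionRing K] [AddCommGroup V]
    [Module K V] {t : Kˣ} (ht : t ≠ 1) (v : Multiplicative V) :
    ∃ (g : Kˣ) (w : Multiplicative V), v = distribToMulAut Kˣ V g w * w⁻¹ := by
  have ht' : (t : K) - 1 ≠ 0 := sub_ne_zero.2 (Units.val_eq_one.not.2 ht)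
  refine ⟨t, .ofAdd (((t : K) - 1)⁻¹ • v.toAdd), ?_⟩
  show v = .ofAdd ((t : K) • ((t : K) - 1)⁻¹ • v.toAdd) *
    (.ofAdd (((t : K) - 1)⁻¹ • v.toAdd))⁻¹
  rw [← ofAdd_neg, ← ofAdd_add, ← sub_eq_add_neg, smul_smul, ← sub_smul, ← sub_one_mul,
    mul_inv_cancel₀ ht', one_smul, ofAdd_toAdd]

/-- The projection `ℂᵐ ⋊ ℂˣ → ℂˣ` induces an isomorphism from the abelianization of
`ℂᵐ ⋊ ℂˣ` onto `ℂˣ`. -/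
theorem abelianization_CmSemidirect (m : ℕ) :
    Function.Bijective
      ⇑(Abelianization.lift (SemidirectProduct.rightHom : CmSemidirect m →* ℂˣ)) := by
  have two_ne_one : Units.mk0 (2 : ℂ) two_ne_zero ≠ 1 := by
    simp [← Units.val_eq_one]
  exact Abelianization.lift_bijective_of_ker_le SemidirectProduct.rightHom_surjective
    (SemidirectProduct.ker_rightHom_le_commutator (distribToMulAut_exists_eq_mul_inv two_ne_one))
end

section
/- Let r ≥ 1 and let 𝔑 ⊆ ℝʳ be a closed convex polytope of dimension r (the convex hull of a finite set whose affine span is all of ℝʳ). Suppose 𝔑 = ⋃_{i ∈ I} N_i is a decomposition into finitely many convex polytopes N_i (convex hulls of finite sets), each of dimension r, with pairwise disjoint (topological) interiors, and suppose that for any two indices i, j such that N_i ∩ N_j has dimension r − 1, the set N_i ∩ N_j is a face (extreme subset) of both N_i and N_j. Then for any face F₁ of some chamber N_i and any face F₂ of some chamber N_j, the intersection F₁ ∩ F₂ is a face (extreme subset) of both F₁ and F₂. -/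
/-!
The heart of the matter is that any two chambers `C a`, `C b` meet in a face of `C a`. Since
`C b` is closed and convex, it suffices to show: if `w ∈ C a ∩ C b` and `w ± v ∈ C a`, then
`w ± ε v ∈ C b` for some `ε > 0`. Suppose not, and call a chamber good if it contains such a
segment through `w`. Join a generic interior point of `C a` to a generic interior point of `C b`,
both close enough to `w` that every chamber they pass through contains `w`; genericity lets the
segment miss every pairwise intersection of codimension at least two. Somewhere along it a good
chamber meets a bad one; their intersection contains `w`, cannot be full-dimensional (disjoint
interiors), so it is a facet, hence a face of the good chamber, and so it contains the segment
through `w` — making the bad chamber good.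

Given this, for faces `F₁` of `C i` and `F₂` of `C j`: if `z ∈ F₁ ∩ F₂` lies inside a segment of
`F₁`, the endpoints lie in `C j` because `C i ∩ C j` is a face of `C i`, hence in `F₂`.
-/

open Set Filter Topology Module MeasureTheory

theorem isExtreme_inter_of_isExtreme_inter {𝕜 E : Type*} [Semiring 𝕜] [PartialOrder 𝕜]
    [AddCommMonoid E] [SMul 𝕜 E] {A B F G : Set E} (hAB : IsExtreme 𝕜 A (A ∩ B))
    (hF : IsExtreme 𝕜 A F) (hG : IsExtreme 𝕜 B G) : IsExtreme 𝕜 F (F ∩ G) := by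
  refine ⟨inter_subset_left, fun x hx y hy z hz hzxy => ⟨hx, ?_⟩⟩
  have hzAB : z ∈ A ∩ B := ⟨hF.subset hz.1, hG.subset hz.2⟩
  exact hG.left_mem_of_mem_openSegment
    (hAB.left_mem_of_mem_openSegment (hF.subset hx) (hF.subset hy) hzAB hzxy).2
    (hAB.right_mem_of_mem_openSegment (hF.subset hx) (hF.subset hy) hzAB hzxy).2 hz.2 hzxy

theorem IsExtreme.add_mem_and_sub_mem {E : Type*} [AddCommGroup E] [Module ℝ E]
    {A F : Set E} (h : IsExtreme ℝ A F) {w v : E} (hw : w ∈ F) (hadd : w + v ∈ A)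
    (hsub : w - v ∈ A) : w + v ∈ F ∧ w - v ∈ F := by
  have hmid : w ∈ openSegment ℝ (w + v) (w - v) :=
    ⟨1 / 2, 1 / 2, by norm_num, by norm_num, by norm_num, by module⟩
  exact ⟨h.left_mem_of_mem_openSegment hadd hsub hw hmid,
    h.right_mem_of_mem_openSegment hadd hsub hw hmid⟩

theorem isExtreme_inter_of_forall_exists_add_smul_mem {E : Type*} [AddCommGroup E] [Module ℝ E]
    [TopologicalSpace E] [IsTopologicalAddGroup E] [ContinuousSMul ℝ E] {C D : Set E}
    (hC : Convex ℝ C) (hD : Convex ℝ D) (hDc : IsClosed D)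
    (h : ∀ w ∈ C ∩ D, ∀ v, w + v ∈ C → w - v ∈ C → ∃ ε > (0 : ℝ), w + ε • v ∈ D) :
    IsExtreme ℝ C (C ∩ D) := by
  refine ⟨inter_subset_left, fun x hx y hy z hz hzxy => ⟨hx, ?_⟩⟩
  set g := AffineMap.lineMap (k := ℝ) y x
  have hg : ∀ t s : ℝ, g t + s • (x - y) = g (t + s) := fun t s => by
    simp only [g, AffineMap.lineMap_apply_module']; module
  have hgC : ∀ t ∈ Icc (0 : ℝ) 1, g t ∈ C := fun t ht => hC.lineMap_mem hy hx ht
  have hgD : (g ⁻¹' D).OrdConnected := (hD.affine_preimage g).ordConnected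
  rw [openSegment_symm, openSegment_eq_image_lineMap] at hzxy
  obtain ⟨t₀, ⟨ht₀, ht₀'⟩, rfl⟩ := hzxy
  suffices (1 : ℝ) ∈ g ⁻¹' D by simpa [g] using this
  refine IsClosed.mem_of_ge_of_forall_exists_gt (a := t₀)
    ((hDc.preimage AffineMap.lineMap_continuous).inter isClosed_Icc) hz.2 ht₀'.le ?_
  rintro t ⟨htD, ht₀t, ht1⟩
  set m := min t (1 - t)
  have hm : 0 < m := lt_min (by linarith) (by linarith)
  obtain ⟨ε, hε, hεD⟩ := h (g t) ⟨hgC t ⟨by linarith, ht1.le⟩, htD⟩ (m • (x - y))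
    (by rw [hg]; exact hgC _ ⟨by linarith, by linarith [min_le_right t (1 - t)]⟩)
    (by rw [sub_eq_add_neg, ← neg_smul, hg]
        exact hgC _ ⟨by linarith [min_le_left t (1 - t)], by linarith⟩)
  rw [smul_smul, hg] at hεD
  have ht' : t < min (t + ε * m) 1 := lt_min (by nlinarith [mul_pos hε hm]) ht1
  exact ⟨_, hgD.out htD hεD ⟨ht'.le, min_le_left _ _⟩, ht', min_le_right _ _⟩

theorem eventually_nhds_forall_mem_imp_mem {X ι : Type*} [TopologicalSpace X] [Finite ι]
    {C : ι → Set X} (hC : ∀ i, IsClosed (C i)) (x : X) :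
    ∀ᶠ y in 𝓝 x, ∀ i, y ∈ C i → x ∈ C i := by
  refine eventually_all.2 fun i => ?_
  by_cases hx : x ∈ C i
  · exact .of_forall fun _ _ => hx
  · exact mem_of_superset ((hC i).isOpen_compl.mem_nhds hx) fun _ hy hyC => (hy hyC).elim

theorem IsPreconnected.exists_mem_of_mem_of_notMem {X ι : Type*} [TopologicalSpace X] [Finite ι]
    {s : Set X} (hs : IsPreconnected s) {C : ι → Set X} (hC : ∀ i, IsClosed (C i))
    (hsC : s ⊆ ⋃ i, C i) {G : Set ι} {i j : ι} (hi : i ∈ G) (hj : j ∉ G)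
    (hsi : (s ∩ C i).Nonempty) (hsj : (s ∩ C j).Nonempty) :
    ∃ x ∈ s, ∃ k ∈ G, ∃ l ∉ G, x ∈ C k ∧ x ∈ C l := by
  have hclosed : ∀ H : Set ι, IsClosed (⋃ k ∈ H, C k) :=
    fun H => H.toFinite.isClosed_biUnion fun k _ => hC k
  have hcover : s ⊆ (⋃ k ∈ G, C k) ∪ ⋃ k ∈ Gᶜ, C k := fun x hx => by
    obtain ⟨k, hk⟩ := mem_iUnion.1 (hsC hx)
    by_cases hkG : k ∈ G
    · exact .inl (mem_biUnion hkG hk)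
    · exact .inr (mem_biUnion hkG hk)
  obtain ⟨x, hxs, hxG, hxG'⟩ := isPreconnected_closed_iff.1 hs _ _ (hclosed G) (hclosed Gᶜ)
    hcover (hsi.mono (inter_subset_inter_right _ (subset_biUnion_of_mem hi)))
    (hsj.mono (inter_subset_inter_right _ (subset_biUnion_of_mem (show j ∈ Gᶜ from hj))))
  simp only [mem_iUnion] at hxG hxG'
  obtain ⟨k, hk, hxk⟩ := hxG
  obtain ⟨l, hl, hxl⟩ := hxG'
  exact ⟨x, hxs, k, hk, l, hl, hxk, hxl⟩

theorem affineSpan_ne_top_of_finrank_lt {k V P : Type*} [DivisionRing k] [AddCommGroup V]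
    [Module k V] [AddTorsor V P] {s : Set P} (h : finrank k (vectorSpan k s) < finrank k V) :
    affineSpan k s ≠ ⊤ := by
  intro htop
  rw [← direction_affineSpan, htop, AffineSubspace.direction_top, finrank_top] at h
  exact h.false

section FiniteDimensional

variable {E : Type*} [NormedAddCommGroup E] [NormedSpace ℝ E] [FiniteDimensional ℝ E]

theorem Convex.interior_nonempty_of_finrank_vectorSpan {s : Set E} (hs : Convex ℝ s)
    (hne : s.Nonempty) (h : finrank ℝ (vectorSpan ℝ s) = finrank ℝ E) :
    (interior s).Nonempty :=
  hs.interior_nonempty_iff_affineSpan_eq_top.2 <|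
    (AffineSubspace.affineSpan_eq_top_iff_vectorSpan_eq_top_of_nonempty ℝ E E hne).2 <|
      Submodule.eq_top_of_finrank_eq h

theorem IsOpen.exists_mem_forall_notMem_affineSpan {κ : Type*} [Finite κ] {U : Set E}
    (hU : IsOpen U) (hne : U.Nonempty) {S : κ → Set E}
    (hS : ∀ k, finrank ℝ (vectorSpan ℝ (S k)) < finrank ℝ E) :
    ∃ p ∈ U, ∀ k, p ∉ affineSpan ℝ (S k) := by
  borelize E
  have hae : ∀ᵐ p ∂(Measure.addHaar : Measure E), ∀ k, p ∉ affineSpan ℝ (S k) :=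
    ae_all_iff.2 fun k => measure_eq_zero_iff_ae_notMem.1 <|
      Measure.addHaar_affineSubspace _ _ (affineSpan_ne_top_of_finrank_lt (hS k))
  obtain ⟨p, hp, hpU⟩ := (Measure.dense_of_ae hae).exists_mem_open hU hne
  exact ⟨p, hpU, hp⟩

theorem exists_segment_disjoint {κ : Type*} [Finite κ] {U W : Set E} (hU : IsOpen U)
    (hU' : U.Nonempty) (hW : IsOpen W) (hW' : W.Nonempty) {S : κ → Set E}
    (hS : ∀ k, finrank ℝ (vectorSpan ℝ (S k)) + 1 < finrank ℝ E) :
    ∃ p ∈ U, ∃ q ∈ W, ∀ k, Disjoint (segment ℝ p q) (S k) := by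
  obtain ⟨p, hpU, hp⟩ := hU.exists_mem_forall_notMem_affineSpan hU' (S := S)
    fun k => by have := hS k; omega
  obtain ⟨q, hqW, hq⟩ := hW.exists_mem_forall_notMem_affineSpan hW' (S := fun k => insert p (S k))
    fun k => (finrank_vectorSpan_insert_le_set ℝ (S k) p).trans_lt (hS k)
  refine ⟨p, hpU, q, hqW, fun k => Set.disjoint_left.2 ?_⟩
  rw [segment_eq_image_lineMap]
  rintro _ ⟨t, ht, rfl⟩ htS
  rcases ht.1.eq_or_lt with rfl | htpos
  · exact hp k (subset_affineSpan ℝ _ (by simpa using htS))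
  · refine hq k ?_
    have hline : AffineMap.lineMap p (AffineMap.lineMap p q t) t⁻¹ = q := by
      rw [AffineMap.lineMap_apply_module', AffineMap.lineMap_apply_module', add_sub_cancel_right,
        smul_smul, inv_mul_cancel₀ htpos.ne', one_smul, sub_add_cancel]
    rw [← hline]
    exact AffineMap.lineMap_mem _ (subset_affineSpan ℝ _ (mem_insert p _))
      (subset_affineSpan ℝ _ (mem_insert_of_mem p htS))

structure IsChamberDecomposition {ι : Type*} (C : ι → Set E) : Prop where
  convex : ∀ i, Convex ℝ (C i)
  isClosed : ∀ i, IsClosed (C i)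
  finrank_vectorSpan : ∀ i, finrank ℝ (vectorSpan ℝ (C i)) = finrank ℝ E
  pairwise_disjoint_interior : Pairwise fun i j => Disjoint (interior (C i)) (interior (C j))
  convex_iUnion : Convex ℝ (⋃ i, C i)
  isExtreme_inter_of_finrank_eq : ∀ i j,
    finrank ℝ (vectorSpan ℝ (C i ∩ C j)) = finrank ℝ E - 1 → IsExtreme ℝ (C i) (C i ∩ C j)

namespace IsChamberDecomposition

variable {ι : Type*} {C : ι → Set E}

theorem mem_closure_interior (hC : IsChamberDecomposition C) {i : ι} {w : E} (hw : w ∈ C i) :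
    w ∈ closure (interior (C i)) := by
  rw [(hC.convex i).closure_interior_eq_closure_of_nonempty_interior
    ((hC.convex i).interior_nonempty_of_finrank_vectorSpan ⟨w, hw⟩ (hC.finrank_vectorSpan i))]
  exact subset_closure hw

theorem exists_add_smul_mem_and_sub_smul_mem [Finite ι] (hC : IsChamberDecomposition C)
    {a b : ι} {w v : E} (hwa : w ∈ C a) (hwb : w ∈ C b) (hadd : w + v ∈ C a) (hsub : w - v ∈ C a) :
    ∃ ε > (0 : ℝ), w + ε • v ∈ C b ∧ w - ε • v ∈ C b := by
  set G : Set ι := {i | ∃ ε > (0 : ℝ), w + ε • v ∈ C i ∧ w - ε • v ∈ C i}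
  by_contra hb
  have ha : a ∈ G := ⟨1, one_pos, by rwa [one_smul], by rwa [one_smul]⟩
  obtain ⟨ρ, hρ, hball⟩ :=
    Metric.eventually_nhds_iff_ball.1 (eventually_nhds_forall_mem_imp_mem hC.isClosed w)
  have hnear : ∀ {i}, w ∈ C i → (interior (C i) ∩ Metric.ball w ρ).Nonempty := fun hwi =>
    inter_comm _ _ ▸ mem_closure_iff.1 (hC.mem_closure_interior hwi) _ Metric.isOpen_ball
      (Metric.mem_ball_self hρ)
  obtain ⟨p, ⟨hpa, hpρ⟩, q, ⟨hqb, hqρ⟩, hpq⟩ := exists_segment_disjoint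
    (isOpen_interior.inter Metric.isOpen_ball) (hnear hwa)
    (isOpen_interior.inter Metric.isOpen_ball) (hnear hwb)
    (S := fun k : {k : ι × ι // finrank ℝ (vectorSpan ℝ (C k.1 ∩ C k.2)) + 1 < finrank ℝ E} =>
      C k.1.1 ∩ C k.1.2) fun k => k.2
  obtain ⟨x, hx, i, hi, j, hj, hxi, hxj⟩ := (convex_segment p q).isPreconnected
    |>.exists_mem_of_mem_of_notMem hC.isClosed
      (hC.convex_iUnion.segment_subset (mem_iUnion_of_mem a (interior_subset hpa))
        (mem_iUnion_of_mem b (interior_subset hqb))) ha hb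
      ⟨p, left_mem_segment ℝ p q, interior_subset hpa⟩
      ⟨q, right_mem_segment ℝ p q, interior_subset hqb⟩
  have hxρ : x ∈ Metric.ball w ρ := (convex_ball w ρ).segment_subset hpρ hqρ hx
  have hij : i ≠ j := by rintro rfl; exact hj hi
  obtain ⟨ε, hε, hεi⟩ := hi
  refine hj ⟨ε, hε, ?_⟩
  rcases (Submodule.finrank_le (vectorSpan ℝ (C i ∩ C j))).lt_or_eq with _ | heq
  · by_cases hlow : finrank ℝ (vectorSpan ℝ (C i ∩ C j)) + 1 < finrank ℝ E
    · exact absurd ⟨hxi, hxj⟩ (Set.disjoint_left.1 (hpq ⟨(i, j), hlow⟩) hx)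
    · have hface := hC.isExtreme_inter_of_finrank_eq i j (by omega)
      have := hface.add_mem_and_sub_mem ⟨hball x hxρ i hxi, hball x hxρ j hxj⟩ hεi.1 hεi.2
      exact ⟨this.1.2, this.2.2⟩
  · obtain ⟨y, hy⟩ := ((hC.convex i).inter (hC.convex j)).interior_nonempty_of_finrank_vectorSpan
      ⟨x, hxi, hxj⟩ heq
    rw [interior_inter] at hy
    exact absurd hy.2 (Set.disjoint_left.1 (hC.pairwise_disjoint_interior hij) hy.1)

theorem isExtreme_inter [Finite ι] (hC : IsChamberDecomposition C) (a b : ι) :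
    IsExtreme ℝ (C a) (C a ∩ C b) :=
  isExtreme_inter_of_forall_exists_add_smul_mem (hC.convex a) (hC.convex b) (hC.isClosed b)
    fun _ hw _ hadd hsub => (hC.exists_add_smul_mem_and_sub_smul_mem hw.1 hw.2 hadd hsub).imp
      fun _ hε => ⟨hε.1, hε.2.1⟩

end IsChamberDecomposition

end FiniteDimensional

theorem face_inter_face_isExtreme_general (r : ℕ)
    (V : Finset (Fin r → ℝ)) (N : Set (Fin r → ℝ))
    (hN : N = convexHull ℝ (V : Set (Fin r → ℝ)))
    (ι : Type) [Fintype ι] (Ni : ι → Set (Fin r → ℝ)) (Vi : ι → Finset (Fin r → ℝ))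
    (hNi : ∀ i, Ni i = convexHull ℝ ((Vi i : Set (Fin r → ℝ))))
    (hcover : ⋃ i, Ni i = N)
    (hdim : ∀ i, Module.finrank ℝ (vectorSpan ℝ (Ni i)) = r)
    (hdisj : ∀ i j, i ≠ j → interior (Ni i) ∩ interior (Ni j) = ∅)
    (hfacet : ∀ i j, Module.finrank ℝ (vectorSpan ℝ (Ni i ∩ Ni j)) = r - 1 →
      IsExtreme ℝ (Ni i) (Ni i ∩ Ni j) ∧ IsExtreme ℝ (Ni j) (Ni i ∩ Ni j))
    (i j : ι) (F₁ F₂ : Set (Fin r → ℝ))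
    (hF₁ : IsExtreme ℝ (Ni i) F₁) (hF₂ : IsExtreme ℝ (Ni j) F₂) :
    IsExtreme ℝ F₁ (F₁ ∩ F₂) ∧ IsExtreme ℝ F₂ (F₁ ∩ F₂) := by
  have hC : IsChamberDecomposition Ni :=
    { convex := fun k => hNi k ▸ convex_convexHull ℝ _
      isClosed := fun k => hNi k ▸ ((Vi k).finite_toSet.isCompact_convexHull (𝕜 := ℝ)).isClosed
      finrank_vectorSpan := fun k => by rw [hdim k, finrank_fin_fun]
      pairwise_disjoint_interior := fun k l hkl =>
        Set.disjoint_iff_inter_eq_empty.2 (hdisj k l hkl)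
      convex_iUnion := hcover ▸ hN ▸ convex_convexHull ℝ _
      isExtreme_inter_of_finrank_eq := fun k l h =>
        (hfacet k l (by rwa [finrank_fin_fun] at h)).1 }
  exact ⟨isExtreme_inter_of_isExtreme_inter (hC.isExtreme_inter i j) hF₁ hF₂,
    inter_comm F₂ F₁ ▸ isExtreme_inter_of_isExtreme_inter (hC.isExtreme_inter j i) hF₂ hF₁⟩

/-- Let `𝔑 ⊆ ℝʳ` be a closed convex polytope of dimension `r`, decomposed into finitely many
convex polytopal chambers of dimension `r` with pairwise disjoint interiors, such that any two
chambers whose intersection has dimension `r - 1` intersect in a common facet (a face of both).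
Then the intersection of a face of any chamber with a face of any chamber is a face of both. -/
theorem face_inter_face_isExtreme (r : ℕ) (hr : 1 ≤ r)
    (V : Finset (Fin r → ℝ)) (N : Set (Fin r → ℝ))
    (hN : N = convexHull ℝ (V : Set (Fin r → ℝ)))
    (hNtop : affineSpan ℝ N = ⊤)
    (ι : Type) [Fintype ι] (Ni : ι → Set (Fin r → ℝ)) (Vi : ι → Finset (Fin r → ℝ))
    (hNi : ∀ i, Ni i = convexHull ℝ ((Vi i : Set (Fin r → ℝ))))
    (hcover : ⋃ i, Ni i = N)
    (hdim : ∀ i, Module.finrank ℝ (vectorSpan ℝ (Ni i)) = r)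
    (hdisj : ∀ i j, i ≠ j → interior (Ni i) ∩ interior (Ni j) = ∅)
    (hfacet : ∀ i j, Module.finrank ℝ (vectorSpan ℝ (Ni i ∩ Ni j)) = r - 1 →
      IsExtreme ℝ (Ni i) (Ni i ∩ Ni j) ∧ IsExtreme ℝ (Ni j) (Ni i ∩ Ni j))
    (i j : ι) (F₁ F₂ : Set (Fin r → ℝ))
    (hF₁ : IsExtreme ℝ (Ni i) F₁) (hF₂ : IsExtreme ℝ (Ni j) F₂) :
    IsExtreme ℝ F₁ (F₁ ∩ F₂) ∧ IsExtreme ℝ F₂ (F₁ ∩ F₂) :=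
  face_inter_face_isExtreme_general r V N hN ι Ni Vi hNi hcover hdim hdisj hfacet i j F₁ F₂ hF₁ hF₂
end
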